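/- Let M be an additive commutative monoid, let r ≥ 1, and let t_1,…,t_r ∈ M. Define multisets of lists Q_1 := {[t_1]} and Q_{m+1} := Q_m.bind (λ α, qs α [t_{m+1}]) for 1 ≤ m < r (the iterated quasi-shuffle product of the one-letter words [t_1],…,[t_r]). Then Q_r = ∑_{i=1}^{r} ∑_{σ ∈ 𝒫(r,i)} {[t_{σ⁻¹(1)},…,t_{σ⁻¹(i)}]} as multisets of lists with entries in M. -/

import Mathlib

open scoped BigOperators

/-- The quasi-shuffle (harmonic) product of two words. -/
def qs {M : Type*} [AddCommMonoid M] : List M → List M → Multiset (List M)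
  | [], w => {w}
  | a :: u, [] => {a :: u}
  | a :: u, b :: v =>
      (qs u (b :: v)).map (a :: ·) + (qs (a :: u) v).map (b :: ·) +
        (qs u v).map (fun w => (a + b) :: w)
termination_by u v => u.length + v.length
decreasing_by all_goals (simp; try omega)

/-- `𝒫 r i`: surjections from `Fin r` onto `Fin i`. -/
def Psurj (r i : ℕ) : Finset (Fin r → Fin i) :=
  Finset.univ.filter Function.Surjective

/-- The word `[t_{σ⁻¹(1)}, …, t_{σ⁻¹(i)}]`. -/
def wordOf {M : Type*} [AddCommMonoid M] {r i : ℕ} (t : Fin r → M) (σ : Fin r → Fin i) :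
    List M :=
  List.ofFn fun k : Fin i => ∑ n ∈ Finset.univ.filter (fun n => σ n = k), t n

/-!
Removing the last point from a surjection `σ : Fin (r + 1) → Fin j` leaves either a surjection
onto `Fin j`, when `r + 1` joined an existing block (one letter of the word gains `t_{r+1}`), or,
when `{r + 1}` is a block of its own, a surjection onto the remaining `j - 1` blocks (the letter
`t_{r+1}` is inserted). Dually, `qs w [b]` is the sum of all insertions of `b` into `w` and all
ways of adding `b` to one letter of `w`. Matching the two decompositions shows that the right-hand
side satisfies the same recursion as `Q`.
-/

open Finset Function

theorem Multiset.map_finsetSum {ι α β : Type*} (f : α → β) (s : Finset ι)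
    (g : ι → Multiset α) : (∑ i ∈ s, g i).map f = ∑ i ∈ s, (g i).map f :=
  map_sum (Multiset.mapAddMonoidHom f) g s

theorem Multiset.finsetSum_bind {ι α β : Type*} (s : Finset ι) (g : ι → Multiset α)
    (f : α → Multiset β) : (∑ i ∈ s, g i).bind f = ∑ i ∈ s, (g i).bind f :=
  map_sum (AddMonoidHom.mk ⟨fun m => m.bind f, Multiset.zero_bind f⟩
    fun m m' => Multiset.add_bind m m' f) g s

section

variable {M : Type*} [AddCommMonoid M]

theorem qs_nil_right : ∀ w : List M, qs w [] = {w}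
  | [] => by simp [qs]
  | _ :: _ => by simp [qs]

theorem qs_cons_singleton (a b : M) (u : List M) :
    qs (a :: u) [b] = (qs u [b]).map (a :: ·) + {b :: a :: u} + {(a + b) :: u} := by
  rw [qs, qs_nil_right, qs_nil_right, Multiset.map_singleton, Multiset.map_singleton]

theorem qs_ofFn_singleton {n : ℕ} (f : Fin n → M) (b : M) :
    qs (List.ofFn f) [b] =
      ∑ k : Fin (n + 1), {List.ofFn (Fin.insertNth k b f)} +
        ∑ k : Fin n, {List.ofFn (update f k (f k + b))} := by
  induction n with
  | zero => simp [qs]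
  | succ n ih =>
    cases f using Fin.consCases with
    | cons a g =>
      rw [List.ofFn_cons, qs_cons_singleton, Fin.sum_univ_succ (n := n),
        Fin.sum_univ_succ (n := n + 1), ih]
      simp only [Multiset.map_add, Multiset.map_finsetSum, Multiset.map_singleton, Fin.cons_zero,
        Fin.cons_succ, Fin.insertNth_zero', Fin.insertNth_succ_cons, Fin.update_cons_zero,
        ← Fin.cons_update, List.ofFn_cons]
      abel

/-- `blockSum t σ k` is `t_{σ⁻¹(k)}`. -/
def blockSum {r i : ℕ} (t : Fin r → M) (σ : Fin r → Fin i) (k : Fin i) : M :=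
  ∑ n ∈ univ.filter (fun n => σ n = k), t n

theorem wordOf_eq_ofFn_blockSum {r i : ℕ} (t : Fin r → M) (σ : Fin r → Fin i) :
    wordOf t σ = List.ofFn (blockSum t σ) := rfl

theorem blockSum_snoc {r i : ℕ} (t : Fin (r + 1) → M) (σ : Fin r → Fin i) (k j : Fin i) :
    blockSum t (Fin.snoc σ k) j =
      blockSum (Fin.init t) σ j + if k = j then t (Fin.last r) else 0 := by
  simp only [blockSum, sum_filter, Fin.sum_univ_castSucc, Fin.snoc_castSucc, Fin.snoc_last,
    Fin.init]

theorem blockSum_snoc_eq_update {r i : ℕ} (t : Fin (r + 1) → M) (σ : Fin r → Fin i)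
    (k : Fin i) :
    blockSum t (Fin.snoc σ k) =
      update (blockSum (Fin.init t) σ) k (blockSum (Fin.init t) σ k + t (Fin.last r)) := by
  funext j
  rw [blockSum_snoc]
  by_cases hj : j = k
  · subst hj
    rw [update_self, if_pos rfl]
  · rw [update_of_ne hj, if_neg (Ne.symm hj), add_zero]

theorem blockSum_snoc_succAbove {r i : ℕ} (t : Fin (r + 1) → M) (σ : Fin r → Fin i)
    (k : Fin (i + 1)) :
    blockSum t (Fin.snoc (fun n => k.succAbove (σ n)) k) =
      Fin.insertNth k (t (Fin.last r)) (blockSum (Fin.init t) σ) := by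
  funext j
  rw [blockSum_snoc]
  cases j using Fin.succAboveCases k with
  | x =>
    have hempty : blockSum (Fin.init t) (fun n => k.succAbove (σ n)) k = 0 :=
      sum_eq_zero fun n hn => absurd (mem_filter.1 hn).2 (Fin.succAbove_ne k (σ n))
    rw [Fin.insertNth_apply_same, hempty, if_pos rfl, zero_add]
  | p m =>
    rw [Fin.insertNth_apply_succAbove, if_neg (Fin.succAbove_ne k m).symm, add_zero]
    simp only [blockSum, Fin.succAbove_right_inj]

theorem qs_wordOf_singleton {r i : ℕ} (t : Fin (r + 1) → M) (σ : Fin r → Fin i) :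
    qs (wordOf (Fin.init t) σ) [t (Fin.last r)] =
      ∑ k : Fin (i + 1), {wordOf t (Fin.snoc (fun n => k.succAbove (σ n)) k)} +
        ∑ k : Fin i, {wordOf t (Fin.snoc σ k)} := by
  simp only [wordOf_eq_ofFn_blockSum, blockSum_snoc_succAbove]
  simp only [blockSum_snoc_eq_update, qs_ofFn_singleton]

theorem mem_Psurj {r i : ℕ} {σ : Fin r → Fin i} : σ ∈ Psurj r i ↔ Surjective σ := by
  simp [Psurj]

theorem Psurj_eq_empty_of_lt {r i : ℕ} (h : r < i) : Psurj r i = ∅ :=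
  filter_eq_empty_iff.2 fun _ _ hσ => (Fintype.card_le_of_surjective _ hσ).not_gt (by simpa)

theorem surjective_init_of_apply_castSucc_eq_last {r i : ℕ} {σ : Fin (r + 1) → Fin i}
    (hσ : Surjective σ) {n : Fin r} (hn : σ n.castSucc = σ (Fin.last r)) :
    Surjective (Fin.init σ) := by
  intro v
  obtain ⟨m, rfl⟩ := hσ v
  cases m using Fin.lastCases with
  | last => exact ⟨n, hn⟩
  | cast m => exact ⟨m, rfl⟩

section SumOverPsurj

variable {β : Type*} [AddCommMonoid β] {r i : ℕ}

theorem sum_Psurj_snoc (F : (Fin (r + 1) → Fin i) → β) :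
    ∑ σ ∈ Psurj r i, ∑ k : Fin i, F (Fin.snoc σ k) =
      ∑ σ ∈ (Psurj (r + 1) i).filter (fun σ => Surjective (Fin.init σ)), F σ := by
  rw [← sum_product']
  refine sum_nbij' (fun p => Fin.snoc p.1 p.2) (fun σ => (Fin.init σ, σ (Fin.last r)))
    ?_ ?_ ?_ ?_ fun _ _ => rfl
  · rintro ⟨σ, k⟩ hσ
    simp only [mem_product, mem_univ, and_true, mem_Psurj] at hσ
    rw [mem_filter, mem_Psurj, Fin.init_snoc]
    refine ⟨fun v => ?_, hσ⟩
    obtain ⟨n, rfl⟩ := hσ v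
    exact ⟨n.castSucc, by simp⟩
  · intro σ hσ
    rw [mem_filter] at hσ
    exact mem_product.2 ⟨mem_Psurj.2 hσ.2, mem_univ _⟩
  · rintro ⟨σ, k⟩ -
    simp
  · rintro σ -
    exact Fin.snoc_init_self σ

theorem sum_Psurj_snoc_succAbove (F : (Fin (r + 1) → Fin (i + 1)) → β) :
    ∑ σ ∈ Psurj r i, ∑ k : Fin (i + 1), F (Fin.snoc (fun n => k.succAbove (σ n)) k) =
      ∑ σ ∈ (Psurj (r + 1) (i + 1)).filter (fun σ => ¬ Surjective (Fin.init σ)), F σ := by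
  rw [← sum_product']
  refine sum_bij (fun p _ => Fin.snoc (fun n => p.2.succAbove (p.1 n)) p.2) ?_ ?_ ?_
    fun _ _ => rfl
  · rintro ⟨σ, k⟩ hσ
    simp only [mem_product, mem_univ, and_true, mem_Psurj] at hσ
    rw [mem_filter, mem_Psurj, Fin.init_snoc]
    refine ⟨fun v => ?_, fun h => ?_⟩
    · cases v using Fin.succAboveCases k with
      | x => exact ⟨Fin.last r, by simp⟩
      | p m =>
        obtain ⟨n, rfl⟩ := hσ m
        exact ⟨n.castSucc, by simp⟩
    · obtain ⟨n, hn⟩ := h k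
      exact Fin.succAbove_ne k (σ n) hn
  · rintro ⟨σ, k⟩ - ⟨τ, l⟩ - h
    obtain rfl : k = l := by simpa using congrFun h (Fin.last r)
    have := congrArg Fin.init h
    simp only [Fin.init_snoc] at this
    simpa using funext fun n => Fin.succAbove_right_injective (congrFun this n)
  · intro σ' hσ'
    rw [mem_filter, mem_Psurj] at hσ'
    obtain ⟨hsurj, hinit⟩ := hσ'
    set k := σ' (Fin.last r)
    have hne : ∀ n : Fin r, σ' n.castSucc ≠ k := fun n hn =>
      hinit (surjective_init_of_apply_castSucc_eq_last hsurj hn)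
    choose σ hσ using fun n : Fin r => Fin.exists_succAbove_eq (hne n)
    refine ⟨(σ, k), mem_product.2 ⟨mem_Psurj.2 fun m => ?_, mem_univ k⟩, ?_⟩
    · obtain ⟨x, hx⟩ := hsurj (k.succAbove m)
      cases x using Fin.lastCases with
      | last => exact absurd hx.symm (Fin.succAbove_ne k m)
      | cast n => exact ⟨n, Fin.succAbove_right_injective ((hσ n).trans hx)⟩
    · conv_rhs => rw [← Fin.snoc_init_self σ']
      congr 1
      exact funext hσ

end SumOverPsurj

/-- Summing from `i = 0` adds nothing for `r ≥ 1`, but gives the empty tuple the value `{[]}`,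
so that the recursion `surjWords_snoc` starts at `r = 0`. -/
def surjWords {r : ℕ} (t : Fin r → M) : Multiset (List M) :=
  ∑ i ∈ range (r + 1), ∑ σ ∈ Psurj r i, {wordOf t σ}

theorem surjWords_fin_zero (t : Fin 0 → M) : surjWords t = {[]} := by
  have hP : Psurj 0 0 = univ := filter_true_of_mem fun _ _ b => b.elim0
  simp [surjWords, hP, wordOf]

theorem surjWords_snoc {r : ℕ} (t : Fin (r + 1) → M) :
    surjWords t = (surjWords (Fin.init t)).bind fun w => qs w [t (Fin.last r)] := by
  have hsurj : ∑ σ ∈ (Psurj (r + 1) (r + 1)).filter (fun σ => Surjective (Fin.init σ)),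
      ({wordOf t σ} : Multiset (List M)) = 0 := by
    rw [← sum_Psurj_snoc, Psurj_eq_empty_of_lt (Nat.lt_succ_self r), sum_empty]
  have hzero : ∑ σ ∈ (Psurj (r + 1) 0).filter (fun σ => ¬ Surjective (Fin.init σ)),
      ({wordOf t σ} : Multiset (List M)) = 0 := by
    simp [Psurj]
  simp only [surjWords, Multiset.finsetSum_bind, Multiset.singleton_bind, qs_wordOf_singleton,
    sum_add_distrib, sum_Psurj_snoc fun σ => ({wordOf t σ} : Multiset (List M)),
    sum_Psurj_snoc_succAbove fun σ => ({wordOf t σ} : Multiset (List M))]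
  rw [← sum_congr rfl fun j _ => sum_filter_add_sum_filter_not (Psurj (r + 1) j)
    (fun σ => Surjective (Fin.init σ)) _, sum_add_distrib, sum_range_succ, hsurj, add_zero,
    sum_range_succ' (fun j => ∑ σ ∈ _ with ¬ _, _), hzero, add_zero, add_comm]

theorem surjWords_eq_sum_Icc {r : ℕ} (hr : 1 ≤ r) (t : Fin r → M) :
    surjWords t = ∑ i ∈ Icc 1 r, ∑ σ ∈ Psurj r i, {wordOf t σ} := by
  have hP : Psurj r 0 = ∅ := filter_eq_empty_iff.2 fun σ _ _ => (σ ⟨0, hr⟩).elim0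
  rw [surjWords, Nat.range_succ_eq_Icc_zero, ← insert_Icc_add_one_left_eq_Icc (Nat.zero_le r),
    sum_insert (by simp), hP, sum_empty, zero_add, zero_add]

end

/-- The iterated quasi-shuffle product of the one-letter words `[t₁],…,[t_r]` equals
`∑_{i=1}^r ∑_{σ ∈ 𝒫(r,i)} [t_{σ⁻¹(1)},…,t_{σ⁻¹(i)}]`. -/
theorem iterated_qs_eq_sum_surj {M : Type*} [AddCommMonoid M] (r : ℕ) (hr : 1 ≤ r)
    (t : Fin r → M) (Q : ℕ → Multiset (List M))
    (hQ1 : Q 1 = {[t ⟨0, hr⟩]})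
    (hQsucc : ∀ m, 1 ≤ m → ∀ hm : m < r, Q (m + 1) = (Q m).bind fun α => qs α [t ⟨m, hm⟩]) :
    Q r = ∑ i ∈ Finset.Icc 1 r, ∑ σ ∈ Psurj r i, ({wordOf t σ} : Multiset (List M)) := by
  have hQ_eq : ∀ m (hm : m ≤ r), 1 ≤ m → Q m = surjWords fun n : Fin m => t (Fin.castLE hm n) := by
    intro m hm h1
    induction m, h1 using Nat.le_induction with
    | base =>
      rw [hQ1, surjWords_snoc, surjWords_fin_zero, Multiset.singleton_bind, qs]
      rfl
    | succ m h1 ih =>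
      rw [hQsucc m h1 hm, ih (Nat.le_of_succ_le hm), surjWords_snoc]
      rfl
  exact (hQ_eq r le_rfl hr).trans (surjWords_eq_sum_Icc hr t)
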